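/- Let θ ∈ (0,1), S > 0, a, b > 0 with a b < π²/4. Let K0 : ℝ → ℝ be twice continuously differentiable, positive, solving the core profile equation K0'' − K0 + S^{1−θ} K0^θ e^{(1−θ)(K0−S)} = 0 on ℝ, with K0(y) → S and K0'(y) → 0 as y → +∞, K0'(z) < 0 for all z > 0, and set L0 := S e^{K0 − S}. Assume 0 < ∫_{−∞}^{∞} K0'(y)² dy < ∞ and that the function z ↦ (1/L0(z)) (K0'(z)² − (K0(z)² − S²)) is integrable on (0, ∞), with P(∞) := ((1−θ)/2) ∫_0^∞ (1/L0(z)) (K0'(z)² − (K0(z)² − S²)) dz. Then the small eigenvalue λ1 := 2 S a b P(∞) / (∫_{−∞}^{∞} K0'(y)² dy · cos²(√(ab))) is strictly negative. -/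

import Mathlib

/-!
Along the spike profile the quantity `E = K0'² - K0² + S²` is the first integral of the
unforced equation. With the forcing `F > 0` one has `E' = 2 K0' (K0'' - K0) = -2 K0' F`,
which is positive where `K0' < 0`, i.e. on `(0, ∞)`. Since `E → 0` at `+∞`, `E < 0` on
`(0, ∞)`; this makes the integrand of `P(∞)` negative, so `P(∞) < 0`, while the denominator
of `λ₁` is positive because `√(ab) < π/2`.
-/

open Filter MeasureTheory Set Topology Real

lemma StrictMonoOn.lt_of_tendsto_atTop {α β : Type*} [LinearOrder α] [NoMaxOrder α]
    [Preorder β] [TopologicalSpace β] [OrderClosedTopology β] {f : α → β} {a : α} {l : β}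
    (hf : StrictMonoOn f (Ioi a)) (hlim : Tendsto f atTop (𝓝 l)) {z : α} (hz : a < z) :
    f z < l := by
  have : Nonempty α := ⟨a⟩
  obtain ⟨w, hzw⟩ := exists_gt z
  have haw : a < w := hz.trans hzw
  refine (hf hz haw hzw).trans_le (ge_of_tendsto hlim ?_)
  filter_upwards [eventually_ge_atTop w] with t hwt
  exact hf.monotoneOn haw (haw.trans_le hwt) hwt

lemma setIntegral_neg_of_forall_neg {X : Type*} [MeasurableSpace X] {μ : Measure X}
    {s : Set X} {f : X → ℝ} (hs : MeasurableSet s) (hμs : μ s ≠ 0) (hf : IntegrableOn f s μ)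
    (hneg : ∀ x ∈ s, f x < 0) : ∫ x in s, f x ∂μ < 0 := by
  have hpos : 0 < ∫ x in s, -f x ∂μ := by
    rw [setIntegral_pos_iff_support_of_nonneg_ae (f := fun x => -f x) _ hf.neg]
    · have hsupp : s ⊆ Function.support fun x => -f x :=
        fun x hx => neg_ne_zero.mpr (hneg x hx).ne
      rwa [inter_eq_self_of_subset_right hsupp, pos_iff_ne_zero]
    · filter_upwards [ae_restrict_mem hs] with x hx
      exact neg_nonneg.mpr (hneg x hx).le
  rwa [integral_neg, neg_pos] at hpos

lemma Real.cos_sqrt_pos {x : ℝ} (hx : x < π ^ 2 / 4) : 0 < cos √x := by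
  refine cos_pos_of_mem_Ioo ⟨by linarith [sqrt_nonneg x, pi_pos], ?_⟩
  rw [sqrt_lt' (by positivity)]
  linarith

lemma hasDerivAt_energy {K K' : ℝ → ℝ} {z k'' : ℝ} (c : ℝ) (hK : HasDerivAt K (K' z) z)
    (hK' : HasDerivAt K' k'' z) :
    HasDerivAt (fun x => K' x ^ 2 - K x ^ 2 + c) (2 * K' z * (k'' - K z)) z := by
  refine (((hK'.fun_pow 2).fun_sub (hK.fun_pow 2)).add_const c).congr_deriv ?_
  norm_num
  ring

lemma strictMonoOn_energy {K : ℝ → ℝ} (hK : ContDiff ℝ 2 K) {s : Set ℝ} (hs : Convex ℝ s)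
    (c : ℝ) (hpos : ∀ z ∈ interior s, 0 < deriv K z * (deriv (deriv K) z - K z)) :
    StrictMonoOn (fun x => deriv K x ^ 2 - K x ^ 2 + c) s := by
  have hK1 : Differentiable ℝ K := hK.differentiable (by norm_num)
  have hK2 : Differentiable ℝ (deriv K) :=
    ((contDiff_succ_iff_deriv (n := 1)).mp hK).2.2.differentiable (by norm_num)
  have hE z := hasDerivAt_energy c (hK1 z).hasDerivAt (hK2 z).hasDerivAt
  refine strictMonoOn_of_deriv_pos hs (fun z _ => (hE z).continuousAt.continuousWithinAt)
    fun z hz => ?_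
  rw [(hE z).deriv]
  linarith [hpos z hz]

theorem small_eigenvalue_negative_general (θ S a b : ℝ) (hθ : θ ∈ Set.Ioo (0 : ℝ) 1)
    (hS : 0 < S) (ha : 0 < a) (hb : 0 < b) (hab : a * b < Real.pi ^ 2 / 4)
    (K0 : ℝ → ℝ) (hK0 : ContDiff ℝ 2 K0) (hK0pos : ∀ y, 0 < K0 y)
    (heq : ∀ y, deriv (deriv K0) y - K0 y
      + S ^ (1 - θ) * K0 y ^ θ * Real.exp ((1 - θ) * (K0 y - S)) = 0)
    (hKS : Tendsto K0 atTop (nhds S))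
    (hK' : Tendsto (deriv K0) atTop (nhds 0))
    (hKdec : ∀ z > (0 : ℝ), deriv K0 z < 0)
    (L0 : ℝ → ℝ) (hL0 : ∀ y, L0 y = S * Real.exp (K0 y - S))
    (hQpos : 0 < ∫ y, deriv K0 y ^ 2)
    (hPint : IntegrableOn
      (fun z => (1 / L0 z) * (deriv K0 z ^ 2 - (K0 z ^ 2 - S ^ 2)))
      (Set.Ioi (0 : ℝ)))
    (Pinf lam1 : ℝ)
    (hPinf : Pinf = (1 - θ) / 2
      * ∫ z in Set.Ioi (0 : ℝ),
          (1 / L0 z) * (deriv K0 z ^ 2 - (K0 z ^ 2 - S ^ 2)))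
    (hlam1 : lam1 = 2 * S * a * b * Pinf
      / ((∫ y, deriv K0 y ^ 2) * Real.cos (Real.sqrt (a * b)) ^ 2)) :
    lam1 < 0 := by
  have hE_mono : StrictMonoOn (fun x => deriv K0 x ^ 2 - K0 x ^ 2 + S ^ 2) (Ioi 0) :=
    strictMonoOn_energy hK0 (convex_Ioi 0) _ fun z hz => by
      rw [interior_Ioi] at hz
      have hF : 0 < S ^ (1 - θ) * K0 z ^ θ * Real.exp ((1 - θ) * (K0 z - S)) := by
        have := hK0pos z
        positivity
      exact mul_pos_of_neg_of_neg (hKdec z hz) (by linarith [heq z])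
  have hE_lim : Tendsto (fun x => deriv K0 x ^ 2 - K0 x ^ 2 + S ^ 2) atTop (𝓝 0) := by
    convert ((hK'.pow 2).sub (hKS.pow 2)).add_const (S ^ 2) using 2
    ring
  have hintegrand_neg : ∀ z ∈ Ioi (0 : ℝ),
      1 / L0 z * (deriv K0 z ^ 2 - (K0 z ^ 2 - S ^ 2)) < 0 := fun z hz => by
    rw [hL0, ← sub_add]
    exact mul_neg_of_pos_of_neg (by positivity) (hE_mono.lt_of_tendsto_atTop hE_lim hz)
  have hPinf_neg : Pinf < 0 := hPinf ▸ mul_neg_of_pos_of_neg (by linarith [hθ.2])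
    (setIntegral_neg_of_forall_neg measurableSet_Ioi (by simp) hPint hintegrand_neg)
  rw [hlam1]
  exact div_neg_of_neg_of_pos (mul_neg_of_pos_of_neg (by positivity) hPinf_neg)
    (mul_pos hQpos (pow_pos (Real.cos_sqrt_pos hab) 2))

/-- The small (translational) eigenvalue
`lam1 = 2 S a b P(∞) / (∫ K0'² dy · cos²(√(ab)))` is strictly negative. -/
theorem small_eigenvalue_negative (θ S a b : ℝ) (hθ : θ ∈ Set.Ioo (0 : ℝ) 1)
    (hS : 0 < S) (ha : 0 < a) (hb : 0 < b) (hab : a * b < Real.pi ^ 2 / 4)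
    (K0 : ℝ → ℝ) (hK0 : ContDiff ℝ 2 K0) (hK0pos : ∀ y, 0 < K0 y)
    (heq : ∀ y, deriv (deriv K0) y - K0 y
      + S ^ (1 - θ) * K0 y ^ θ * Real.exp ((1 - θ) * (K0 y - S)) = 0)
    (hKS : Tendsto K0 atTop (nhds S))
    (hK' : Tendsto (deriv K0) atTop (nhds 0))
    (hKdec : ∀ z > (0 : ℝ), deriv K0 z < 0)
    (L0 : ℝ → ℝ) (hL0 : ∀ y, L0 y = S * Real.exp (K0 y - S))
    (hQint : Integrable (fun y => deriv K0 y ^ 2))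
    (hQpos : 0 < ∫ y, deriv K0 y ^ 2)
    (hPint : IntegrableOn
      (fun z => (1 / L0 z) * (deriv K0 z ^ 2 - (K0 z ^ 2 - S ^ 2)))
      (Set.Ioi (0 : ℝ)))
    (Pinf lam1 : ℝ)
    (hPinf : Pinf = (1 - θ) / 2
      * ∫ z in Set.Ioi (0 : ℝ),
          (1 / L0 z) * (deriv K0 z ^ 2 - (K0 z ^ 2 - S ^ 2)))
    (hlam1 : lam1 = 2 * S * a * b * Pinf
      / ((∫ y, deriv K0 y ^ 2) * Real.cos (Real.sqrt (a * b)) ^ 2)) :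
    lam1 < 0 :=
  small_eigenvalue_negative_general θ S a b hθ hS ha hb hab K0 hK0 hK0pos heq hKS hK' hKdec L0 hL0
    hQpos hPint Pinf lam1 hPinf hlam1
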